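/- arXiv:1606.04679 — 3 statements merged into one kernel-verified Lean document; each statement's English description precedes it below -/
import Mathlib

section
/- Let T be a DFS tree of a connected undirected graph G rooted at r, and let u ≠ r be a vertex of G. Then u is a cut vertex of G if and only if u has a child v in T such that no descendant of v (including v itself) has an edge in G to a strict ancestor of u. -/
open SimpleGraph

universe u₁ u₂

variable {V : Type u₁} {W : Type u₂}

/-- `H` is a minor of `G`: there is a branch decomposition, i.e. a partial map
assigning to some vertices of `G` a vertex of `H`, whose branch sets are
nonempty and connected, and such that every edge of `H` is realized by an
edge of `G` between the corresponding branch sets. -/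
def IsMinorOf (H : SimpleGraph W) (G : SimpleGraph V) : Prop :=
  ∃ f : V → Option W,
    (∀ w : W, (G.induce {v | f v = some w}).Connected) ∧
    (∀ w₁ w₂ : W, H.Adj w₁ w₂ →
      ∃ v₁ v₂ : V, f v₁ = some w₁ ∧ f v₂ = some w₂ ∧ G.Adj v₁ v₂)

/-- The cone over `G`: add a new apex vertex adjacent to all vertices of `G`. -/
def cone (G : SimpleGraph V) : SimpleGraph (Option V) :=
  SimpleGraph.fromRel (fun a b =>
    a = none ∨ ∃ u v : V, a = some u ∧ b = some v ∧ G.Adj u v)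

/-- A graph is planar iff it has neither a `K₅` nor a `K₃,₃` minor (Wagner). -/
def Planar (G : SimpleGraph V) : Prop :=
  ¬ IsMinorOf (⊤ : SimpleGraph (Fin 5)) G ∧
  ¬ IsMinorOf (completeBipartiteGraph (Fin 3) (Fin 3)) G

/-- A graph is outerplanar iff the cone over it is planar (equivalently, it
has a planar embedding with all vertices on the outer face). -/
def Outerplanar (G : SimpleGraph V) : Prop := Planar (cone G)

/-- `v` is a cut vertex of `G`: `G` is connected but deleting `v` disconnects it. -/
def IsCutVertex (G : SimpleGraph V) (v : V) : Prop :=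
  G.Connected ∧ ¬ (G.induce {u | u ≠ v}).Connected

/-- `G` is biconnected: connected with no cut vertex. -/
def Biconnected (G : SimpleGraph V) : Prop :=
  G.Connected ∧ ∀ v : V, ¬ IsCutVertex G v

/-- Degree of a vertex, as the cardinality of its neighbour set. -/
noncomputable def deg (G : SimpleGraph V) (v : V) : ℕ := (G.neighborSet v).ncard

/-- Two `a`-`b` walks are internally vertex-disjoint if they share no
vertices other than `a` and `b`. -/
def InternallyDisjoint {G : SimpleGraph V} {a b : V} (p q : G.Walk a b) : Prop :=
  ∀ w : V, w ∈ p.support → w ∈ q.support → w = a ∨ w = b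

/-- A chain of `G` with endpoints `a` and `b`, represented by the path `p`
from `a` to `b`: all internal vertices have degree two, and either both
endpoints have degree greater than two (a path chain), or the chain is a
cycle of degree-two vertices, represented by a Hamiltonian-on-its-support
path between two adjacent vertices `a` and `b` of the cycle. -/
def IsGraphChain (G : SimpleGraph V) {a b : V} (p : G.Walk a b) : Prop :=
  p.IsPath ∧ 2 ≤ p.length ∧
    (∀ v ∈ p.support, v ≠ a → v ≠ b → deg G v = 2) ∧
    ((2 < deg G a ∧ 2 < deg G b) ∨
      (G.Adj a b ∧ ∀ v ∈ p.support, deg G v = 2))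

/-- The graph on the endpoints of the edges in `E'`, with edge set `E'`. -/
def graphOn (E' : Set (Sym2 V)) :
    SimpleGraph {v : V | ∃ e ∈ E', v ∈ e} :=
  (SimpleGraph.fromEdgeSet E').induce {v : V | ∃ e ∈ E', v ∈ e}

/-- `u` is an ancestor of `v` in the tree `T` rooted at `r`: it lies on the
(unique) path from `r` to `v`. -/
def IsAncestor (T : SimpleGraph V) (r u v : V) : Prop :=
  ∀ p : T.Walk r v, p.IsPath → u ∈ p.support

/-- `T` is a DFS tree of `G` rooted at `r`: a spanning tree of `G` such that
every edge of `G` joins two vertices comparable in the ancestor order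
(i.e. all non-tree edges are back edges). -/
def IsDFSTree (G T : SimpleGraph V) (r : V) : Prop :=
  T ≤ G ∧ T.IsTree ∧
    ∀ u v : V, G.Adj u v → IsAncestor T r u v ∨ IsAncestor T r v u

/-!
Removing a vertex `u ≠ r` splits the tree `T` into the subtrees of the children of `u` and the
rest, which contains `r` and stays connected through tree edges. As every edge of `G` joins a
vertex to one of its ancestors, an edge leaving the subtree of a child `v` of `u` ends at `u` or at
a strict ancestor of `u`. Hence `G - u` is connected iff the subtree of every child of `u` has an
edge to a strict ancestor of `u`.
-/

namespace SimpleGraph.IsTree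

variable {T : SimpleGraph V}

noncomputable def pathFrom (hT : T.IsTree) (r x : V) : T.Walk r x :=
  (hT.existsUnique_path r x).exists.choose

lemma isPath_pathFrom (hT : T.IsTree) (r x : V) : (hT.pathFrom r x).IsPath :=
  (hT.existsUnique_path r x).exists.choose_spec

lemma eq_pathFrom (hT : T.IsTree) {r x : V} {p : T.Walk r x} (hp : p.IsPath) :
    p = hT.pathFrom r x :=
  (hT.existsUnique_path r x).unique hp (hT.isPath_pathFrom r x)

end SimpleGraph.IsTree

namespace IsAncestor

variable {T : SimpleGraph V} {r u v x y z : V}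

lemma iff_mem_support (hT : T.IsTree) :
    IsAncestor T r x y ↔ x ∈ (hT.pathFrom r y).support :=
  ⟨fun h => h _ (hT.isPath_pathFrom r y), fun h _ hp => hT.eq_pathFrom hp ▸ h⟩

lemma refl (x : V) : IsAncestor T r x x := fun p _ => p.end_mem_support

lemma root (x : V) : IsAncestor T r r x := fun p _ => p.start_mem_support

lemma takeUntil_pathFrom [DecidableEq V] (hT : T.IsTree)
    (hx : x ∈ (hT.pathFrom r y).support) :
    (hT.pathFrom r y).takeUntil x hx = hT.pathFrom r x :=
  hT.eq_pathFrom ((hT.isPath_pathFrom r y).takeUntil hx)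

lemma of_mem_support_dropUntil [DecidableEq V] (hT : T.IsTree)
    (hx : x ∈ (hT.pathFrom r y).support) (hz : z ∈ ((hT.pathFrom r y).dropUntil x hx).support) :
    IsAncestor T r x z := by
  set p := hT.pathFrom r y
  have hq : ((p.takeUntil x hx).append ((p.dropUntil x hx).takeUntil z hz)).IsPath := by
    have hp : (((p.takeUntil x hx).append ((p.dropUntil x hx).takeUntil z hz)).append
        ((p.dropUntil x hx).dropUntil z hz)).IsPath := by
      rw [← Walk.append_assoc, Walk.take_spec, Walk.take_spec]
      exact hT.isPath_pathFrom r y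
    exact hp.of_append_left
  rw [iff_mem_support hT, ← hT.eq_pathFrom hq, Walk.mem_support_append_iff]
  exact Or.inl (Walk.end_mem_support _)

lemma trans (hT : T.IsTree) (hxy : IsAncestor T r x y) (hyz : IsAncestor T r y z) :
    IsAncestor T r x z := by
  classical
  rw [iff_mem_support hT] at hxy hyz ⊢
  rw [← takeUntil_pathFrom hT hyz] at hxy
  exact Walk.support_takeUntil_subset_support _ hyz hxy

lemma antisymm (hT : T.IsTree) (hxy : IsAncestor T r x y) (hyx : IsAncestor T r y x) :
    x = y := by
  classical
  by_contra hne
  rw [iff_mem_support hT] at hxy hyx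
  rw [← takeUntil_pathFrom hT hxy] at hyx
  have hnd := (hT.isPath_pathFrom r y).support_nodup
  rw [← Walk.take_spec (hT.pathFrom r y) hxy, Walk.support_append] at hnd
  have hy : y ∈ ((hT.pathFrom r y).dropUntil x hxy).support.tail := by
    have hy := Walk.end_mem_support ((hT.pathFrom r y).dropUntil x hxy)
    rw [← Walk.cons_tail_support, List.mem_cons] at hy
    exact hy.resolve_left (Ne.symm hne)
  exact List.disjoint_of_nodup_append hnd hyx hy

lemma total (hT : T.IsTree) (hx : IsAncestor T r x y) (hz : IsAncestor T r z y) :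
    IsAncestor T r x z ∨ IsAncestor T r z x := by
  classical
  rw [iff_mem_support hT] at hx hz
  rw [← Walk.take_spec (hT.pathFrom r y) hx, Walk.mem_support_append_iff,
    takeUntil_pathFrom hT hx, ← iff_mem_support hT] at hz
  exact hz.symm.imp_left (of_mem_support_dropUntil hT hx)

lemma child_iff (hT : T.IsTree) (hadj : T.Adj u v) (huv : IsAncestor T r u v) :
    IsAncestor T r z v ↔ IsAncestor T r z u ∨ z = v := by
  have hv : v ∉ (hT.pathFrom r u).support := fun h =>
    hadj.ne (antisymm hT huv ((iff_mem_support hT).mpr h))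
  have hpath : ((hT.pathFrom r u).concat hadj).IsPath :=
    (hT.isPath_pathFrom r u).concat hv hadj
  rw [iff_mem_support hT, ← hT.eq_pathFrom hpath, Walk.support_concat, List.mem_append,
    List.mem_singleton, ← iff_mem_support hT]

lemma exists_child (hT : T.IsTree) (hux : IsAncestor T r u x) (hne : u ≠ x) :
    ∃ v, T.Adj u v ∧ IsAncestor T r u v ∧ IsAncestor T r v x := by
  classical
  rw [iff_mem_support hT] at hux
  obtain ⟨v, hadj, q, hq⟩ := Walk.exists_eq_cons_of_ne hne ((hT.pathFrom r x).dropUntil u hux)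
  have hv : v ∈ ((hT.pathFrom r x).dropUntil u hux).support := by simp [hq]
  refine ⟨v, hadj, of_mem_support_dropUntil hT hux hv, ?_⟩
  exact (iff_mem_support hT).mpr (Walk.support_dropUntil_subset_support _ hux hv)

lemma exists_walk (hT : T.IsTree) (hvx : IsAncestor T r v x) :
    ∃ p : T.Walk v x, ∀ z ∈ p.support, IsAncestor T r v z := by
  classical
  rw [iff_mem_support hT] at hvx
  exact ⟨_, fun _ => of_mem_support_dropUntil hT hvx⟩

end IsAncestor

namespace SimpleGraph

variable {G : SimpleGraph V} {s : Set V}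

lemma induce_connected_of_forall_exists_walk {r : V} (hr : r ∈ s)
    (h : ∀ x ∈ s, ∃ p : G.Walk r x, ∀ z ∈ p.support, z ∈ s) : (G.induce s).Connected := by
  rw [connected_iff_exists_forall_reachable]
  refine ⟨⟨r, hr⟩, fun ⟨x, hx⟩ => ?_⟩
  obtain ⟨p, hp⟩ := h x hx
  exact ⟨p.induce s hp⟩

lemma Reachable.exists_walk_of_induce {x y : s} (h : (G.induce s).Reachable x y) :
    ∃ p : G.Walk x y, ∀ z ∈ p.support, z ∈ s := by
  obtain ⟨p⟩ := h
  refine ⟨p.map (Embedding.induce s).toHom, fun z hz => ?_⟩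
  obtain ⟨w, -, rfl⟩ := List.mem_map.mp (Walk.support_map _ p ▸ hz)
  exact w.2

end SimpleGraph

section CutVertex

open IsAncestor

variable {G T : SimpleGraph V} {r u v : V}

lemma exists_walk_avoiding_of_forall_child (hTG : T ≤ G) (hT : T.IsTree) (hu : u ≠ r)
    (hchild : ∀ v, T.Adj u v → IsAncestor T r u v →
      ∃ w a, IsAncestor T r v w ∧ IsAncestor T r a u ∧ a ≠ u ∧ G.Adj w a)
    {x : V} (hx : x ≠ u) : ∃ p : G.Walk r x, ∀ z ∈ p.support, z ≠ u := by
  by_cases hux : IsAncestor T r u x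
  · obtain ⟨v, hadj, huv, hvx⟩ := exists_child hT hux (Ne.symm hx)
    obtain ⟨w, a, hvw, hau, hne, hwa⟩ := hchild v hadj huv
    have desc_ne : ∀ z, IsAncestor T r v z → z ≠ u := fun z hvz hzu =>
      hadj.ne (antisymm hT huv (hzu ▸ hvz))
    obtain ⟨p₁, hp₁⟩ := exists_walk hT hvw
    obtain ⟨p₂, hp₂⟩ := exists_walk hT hvx
    -- `r ⇝ a` along the tree, the edge `a w`, then `w ⇝ v ⇝ x` inside the subtree of `v`
    refine ⟨((hT.pathFrom r a).mapLe hTG).append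
      (.cons hwa.symm ((p₁.reverse.append p₂).mapLe hTG)), fun z hz => ?_⟩
    simp only [Walk.mem_support_append_iff, Walk.support_cons, List.mem_cons,
      Walk.support_mapLe_eq_support, Walk.support_reverse, List.mem_reverse] at hz
    rcases hz with hz | rfl | hz | hz
    · rintro rfl
      exact hne (antisymm hT hau ((iff_mem_support hT).mpr hz))
    · exact hne
    · exact desc_ne z (hp₁ z hz)
    · exact desc_ne z (hp₂ z hz)
  · refine ⟨(hT.pathFrom r x).mapLe hTG, fun z hz hzu => hux ?_⟩
    rw [Walk.support_mapLe_eq_support] at hz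
    exact (iff_mem_support hT).mpr (hzu ▸ hz)

lemma mem_support_of_walk_leaving_subtree (hT : T.IsTree)
    (hback : ∀ a b, G.Adj a b → IsAncestor T r a b ∨ IsAncestor T r b a)
    (hadj : T.Adj u v) (huv : IsAncestor T r u v)
    (hno : ¬ ∃ w a, IsAncestor T r v w ∧ IsAncestor T r a u ∧ a ≠ u ∧ G.Adj w a)
    {x y : V} (p : G.Walk x y) (hx : IsAncestor T r v x) (hy : ¬ IsAncestor T r v y) :
    u ∈ p.support := by
  induction p with
  | nil => exact absurd hx hy
  | @cons a b c hab p ih =>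
    rw [Walk.support_cons, List.mem_cons]
    by_cases hb : IsAncestor T r v b
    · exact Or.inr (ih hb hy)
    have hbu : IsAncestor T r b u := by
      rcases hback a b hab with hab' | hba
      · exact absurd (trans hT hx hab') hb
      rcases total hT hba hx with hbv | hvb
      · refine ((child_iff hT hadj huv).mp hbv).resolve_right fun e => hb ?_
        rw [e]
        exact .refl v
      · exact absurd hvb hb
    by_cases hbu' : b = u
    · exact Or.inr (hbu' ▸ p.start_mem_support)
    · exact absurd ⟨a, b, hx, hbu, hbu', hab⟩ hno

lemma not_connected_induce_of_child (hT : T.IsTree)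
    (hback : ∀ a b, G.Adj a b → IsAncestor T r a b ∨ IsAncestor T r b a) (hu : u ≠ r)
    (hadj : T.Adj u v) (huv : IsAncestor T r u v)
    (hno : ¬ ∃ w a, IsAncestor T r v w ∧ IsAncestor T r a u ∧ a ≠ u ∧ G.Adj w a) :
    ¬ (G.induce {x | x ≠ u}).Connected := fun hconn => by
  obtain ⟨p, hp⟩ := (hconn.preconnected ⟨v, hadj.ne'⟩ ⟨r, hu.symm⟩).exists_walk_of_induce
  have hvr : ¬ IsAncestor T r v r := fun h => hu (antisymm hT (trans hT huv h) (root u))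
  exact hp u (mem_support_of_walk_leaving_subtree hT hback hadj huv hno p (refl v) hvr) rfl

end CutVertex

theorem nonroot_is_cut_vertex_iff_general {G T : SimpleGraph V} {r u : V}
    (hG : G.Connected) (hT : IsDFSTree G T r) (hu : u ≠ r) :
    IsCutVertex G u ↔
      ∃ v : V, T.Adj u v ∧ IsAncestor T r u v ∧
        ¬ ∃ w a : V, IsAncestor T r v w ∧ IsAncestor T r a u ∧ a ≠ u ∧ G.Adj w a := by
  obtain ⟨hTG, hT, hback⟩ := hT
  constructor
  · rintro ⟨-, hdisc⟩
    by_contra! hchild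
    exact hdisc (induce_connected_of_forall_exists_walk hu.symm fun _ hx =>
      exists_walk_avoiding_of_forall_child hTG hT hu hchild hx)
  · rintro ⟨v, hadj, huv, hno⟩
    exact ⟨hG, not_connected_induce_of_child hT hback hu hadj huv hno⟩

/-- A non-root vertex `u` of a DFS tree `T` of a connected graph `G` is a cut
vertex of `G` iff `u` has a child `v` in `T` such that no descendant of `v`
(including `v`) has an edge of `G` to a strict ancestor of `u`. -/
theorem nonroot_is_cut_vertex_iff [Fintype V] {G T : SimpleGraph V} {r u : V}
    (hG : G.Connected) (hT : IsDFSTree G T r) (hu : u ≠ r) :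
    IsCutVertex G u ↔
      ∃ v : V, T.Adj u v ∧ IsAncestor T r u v ∧
        ¬ ∃ w a : V, IsAncestor T r v w ∧ IsAncestor T r a u ∧ a ≠ u ∧ G.Adj w a :=
  nonroot_is_cut_vertex_iff_general hG hT hu
end

section
/- Let G = (V,E) be a biconnected outerplanar graph with at least three vertices, and let C be a chain in G with endpoints v1 and v2. Then the graph with edge set (E \ C) ∪ {{v1,v2}} (on the vertices that are endpoints of these edges) is biconnected and outerplanar. -/
/-! Contracting the chain minus its last vertex onto its first vertex `v₁` yields a graph that
contains the new one, so the new graph is a minor of `G`; as the cone of a minor is a minor of the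
cone, outerplanarity passes to minors.

For biconnectivity, an internal vertex of the chain has degree two, so all its neighbours lie on
the chain, and a walk of `G` between vertices off the chain interior can enter and leave the
interior only through `v₁` and `v₂`. Cutting out each such excursion, and using the new edge
`v₁v₂` when it enters and leaves through different ends, gives a walk of the new graph through
vertices of the original walk, so connectivity of `G` and of `G` minus a vertex transfers. -/

open SimpleGraph

universe u₁ u₂

variable {V : Type u₁} {W : Type u₂}

namespace SimpleGraph

variable {U : Type*} {G : SimpleGraph V}

theorem Reachable.lift {K : SimpleGraph U} (φ : U → V)
    (h : ∀ a b, K.Adj a b → G.Reachable (φ a) (φ b)) {a b : U} (hab : K.Reachable a b) :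
    G.Reachable (φ a) (φ b) := by
  obtain ⟨w⟩ := hab
  induction w with
  | nil => rfl
  | cons hadj _ ih => exact (h _ _ hadj).trans ih

theorem connected_induce_image {G' : SimpleGraph W} (φ : G →g G') {s : Set V}
    (hs : (G.induce s).Connected) : (G'.induce (φ '' s)).Connected :=
  hs.map (induceHom φ (Set.mapsTo_image φ s)) fun ⟨_, x, hx, hxy⟩ => ⟨⟨x, hx⟩, Subtype.ext hxy⟩

theorem connected_induce_singleton (x : V) : (G.induce {x}).Connected :=
  Connected.of_subsingleton

end SimpleGraph

section Minor

variable {U : Type*} {G : SimpleGraph V} {H : SimpleGraph W}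

theorem IsMinorOf.trans {K : SimpleGraph U} (hKH : IsMinorOf K H) (hHG : IsMinorOf H G) :
    IsMinorOf K G := by
  obtain ⟨g, hg_conn, hg_adj⟩ := hKH
  obtain ⟨f, hf_conn, hf_adj⟩ := hHG
  refine ⟨fun v => (f v).bind g, fun k => ?_, fun k₁ k₂ hk => ?_⟩
  · set A := {v | (f v).bind g = some k}
    have hsub : ∀ w, g w = some k → {v | f v = some w} ⊆ A := fun w hw v (hv : f v = some w) => by
      simp [A, hv, hw]
    have hbranch : ∀ w (hw : g w = some k) {v v'} (hv : f v = some w) (hv' : f v' = some w),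
        (G.induce A).Reachable ⟨v, hsub w hw hv⟩ ⟨v', hsub w hw hv'⟩ := fun w hw v v' hv hv' =>
      ((hf_conn w).preconnected ⟨v, hv⟩ ⟨v', hv'⟩).map (G.induceHomOfLE (hsub w hw)).toHom
    have hne : ∀ w, ∃ v, f v = some w := fun w => (hf_conn w).nonempty.elim fun v => ⟨v.1, v.2⟩
    choose σ hσ using hne
    -- representatives of the `G`-branch sets are linked along the connected `H`-branch set of `k`
    let rep : {w | g w = some k} → A := fun w => ⟨σ w, hsub w w.2 (hσ w)⟩
    have hrep : ∀ w w', (H.induce _).Adj w w' → (G.induce A).Reachable (rep w) (rep w') := by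
      intro w w' hww'
      obtain ⟨d, d', hd, hd', hdd'⟩ := hf_adj w w' hww'
      have hdd' : (G.induce A).Adj ⟨d, hsub w w.2 hd⟩ ⟨d', hsub w' w'.2 hd'⟩ := hdd'
      exact ((hbranch w w.2 (hσ w) hd).trans hdd'.reachable).trans (hbranch w' w'.2 hd' (hσ w'))
    obtain ⟨w₀⟩ := (hg_conn k).nonempty
    refine (connected_iff_exists_forall_reachable _).2 ⟨rep w₀, fun ⟨v, hv⟩ => ?_⟩
    obtain ⟨w, hfv, hw⟩ := Option.bind_eq_some_iff.1 hv
    exact (((hg_conn k).preconnected w₀ ⟨w, hw⟩).lift rep hrep).trans (hbranch w hw (hσ w) hfv)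
  · obtain ⟨w₁, w₂, hw₁, hw₂, hw⟩ := hg_adj k₁ k₂ hk
    obtain ⟨v₁, v₂, hv₁, hv₂, hv⟩ := hf_adj w₁ w₂ hw
    exact ⟨v₁, v₂, by simp [hv₁, hw₁], by simp [hv₂, hw₂], hv⟩

@[simp] theorem cone_adj_some {u v : V} : (cone G).Adj (some u) (some v) ↔ G.Adj u v := by
  simp only [cone, fromRel_adj, ne_eq, Option.some.injEq, reduceCtorEq, exists_and_left,
    exists_eq_left', false_or]
  exact ⟨fun h => h.2.elim id Adj.symm, fun h => ⟨h.ne, Or.inl h⟩⟩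

theorem cone_adj_none (v : V) : (cone G).Adj none (some v) := by
  simp [cone, SimpleGraph.fromRel_adj]

theorem IsMinorOf.cone (h : IsMinorOf H G) : IsMinorOf (cone H) (cone G) := by
  obtain ⟨f, hconn, hadj⟩ := h
  refine ⟨fun a => a.elim (some none) fun v => (f v).map some, ?_, ?_⟩
  · rintro (_ | w)
    · have : {a : Option V | a.elim (some none) (fun v => (f v).map some) = some none} =
          {none} := by
        ext (_ | v) <;> simp
      dsimp only
      rw [this]
      exact connected_induce_singleton none
    · let φ : G →g _root_.cone G := ⟨some, cone_adj_some.2⟩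
      have : {a : Option V | a.elim (some none) (fun v => (f v).map some) = some (some w)} =
          φ '' {v | f v = some w} := by
        ext (_ | v) <;> simp [φ]
      dsimp only
      rw [this]
      exact connected_induce_image φ (hconn w)
  · rintro (_ | w₁) (_ | w₂) hw
    · exact absurd hw (SimpleGraph.irrefl _)
    · obtain ⟨⟨v, hv⟩⟩ := (hconn w₂).nonempty
      exact ⟨none, v, rfl, by simpa using hv, cone_adj_none v⟩
    · obtain ⟨⟨v, hv⟩⟩ := (hconn w₁).nonempty
      exact ⟨v, none, by simpa using hv, rfl, (cone_adj_none v).symm⟩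
    · obtain ⟨v₁, v₂, hv₁, hv₂, hv⟩ := hadj w₁ w₂ (cone_adj_some.1 hw)
      exact ⟨v₁, v₂, by simp [hv₁], by simp [hv₂], cone_adj_some.2 hv⟩

theorem Planar.of_isMinorOf (h : IsMinorOf H G) (hG : Planar G) : Planar H :=
  ⟨fun hK => hG.1 (hK.trans h), fun hK => hG.2 (hK.trans h)⟩

theorem Outerplanar.of_isMinorOf (h : IsMinorOf H G) (hG : Outerplanar G) : Outerplanar H :=
  Planar.of_isMinorOf h.cone hG

end Minor

theorem isMinorOf_of_contract {G : SimpleGraph V} {T A : Set V} {a : V} (K : SimpleGraph T)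
    (hA : (G.induce A).Connected) (hAT : A ∩ T = {a})
    (hK : ∀ x y : T, K.Adj x y → ∃ x' y', (x' = x.1 ∨ x' ∈ A ∧ x.1 = a) ∧
      (y' = y.1 ∨ y' ∈ A ∧ y.1 = a) ∧ G.Adj x' y') :
    IsMinorOf K G := by
  classical
  have ha : a ∈ A ∩ T := hAT ▸ Set.mem_singleton a
  let f : V → Option T := fun v =>
    if hv : v ∈ T then some ⟨v, hv⟩ else if v ∈ A then some ⟨a, ha.2⟩ else none
  have hAT' : ∀ v ∈ A, v ∈ T → v = a := fun v hA hT => hAT.subset ⟨hA, hT⟩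
  have hf : ∀ v (x : T), f v = some x ↔ v = x ∨ v ∈ A ∧ x.1 = a := by
    intro v x
    by_cases hvT : v ∈ T
    · simp only [f, dif_pos hvT, Option.some.injEq, Subtype.ext_iff]
      grind
    · by_cases hvA : v ∈ A
      · simp only [f, dif_neg hvT, if_pos hvA, Option.some.injEq, Subtype.ext_iff]
        grind
      · simp only [f, dif_neg hvT, if_neg hvA, reduceCtorEq, false_iff]
        grind
  refine ⟨f, fun x => ?_, fun x y hxy => ?_⟩
  · by_cases hx : x.1 = a
    · have : {v | f v = some x} = A := by
        ext v
        simp only [Set.mem_ofPred_eq, hf, hx]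
        grind
      rw [this]
      exact hA
    · have : {v | f v = some x} = {x.1} := by
        ext v
        simp [hf, hx]
      rw [this]
      exact connected_induce_singleton x.1
  · obtain ⟨x', y', hx', hy', hxy'⟩ := hK x y hxy
    exact ⟨x', y', (hf x' x).2 hx', (hf y' y).2 hy', hxy'⟩

namespace SimpleGraph.Walk

variable {G H : SimpleGraph V} {I B : Set V}

theorem exists_exit_walk_avoiding (hGH : ∀ x y, x ∉ I → y ∉ I → G.Adj x y → H.Adj x y)
    (hexit : ∀ x z, x ∈ I → G.Adj x z → z ∉ I → z ∈ B) (hB : B.Pairwise H.Adj)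
    {x y : V} (w : G.Walk x y) (hy : y ∉ I) :
    ∃ c, (c = x ∨ x ∈ I ∧ c ∈ B) ∧
      ∃ q : H.Walk c y, ∀ v ∈ q.support, v ∈ w.support ∧ v ∉ I := by
  induction w with
  | nil => exact ⟨_, Or.inl rfl, .nil, by simpa using hy⟩
  | @cons x z y hxz w ih =>
    obtain ⟨c, hc, q, hq⟩ := ih hy
    have hq' : ∀ v ∈ q.support, v ∈ (cons hxz w).support ∧ v ∉ I := fun v hv =>
      ⟨List.mem_cons_of_mem _ (hq v hv).1, (hq v hv).2⟩
    have hcI : c ∉ I := (hq c q.start_mem_support).2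
    by_cases hx : x ∈ I
    · refine ⟨c, Or.inr ⟨hx, ?_⟩, q, hq'⟩
      rcases hc with rfl | ⟨-, hc⟩
      · exact hexit x c hx hxz hcI
      · exact hc
    · have hxc : x = c ∨ H.Adj x c := by
        rcases hc with rfl | ⟨hz, hc⟩
        · exact Or.inr (hGH x c hx hcI hxz)
        · exact (eq_or_ne x c).imp_right (hB (hexit z x hz hxz.symm hx) hc)
      refine ⟨x, Or.inl rfl, ?_⟩
      rcases hxc with rfl | hadj
      · exact ⟨q, hq'⟩
      · refine ⟨.cons hadj q, fun v hv => ?_⟩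
        rcases List.mem_cons.1 hv with rfl | hv
        · exact ⟨(cons hxz w).start_mem_support, hx⟩
        · exact hq' v hv

theorem exists_walk_avoiding (hGH : ∀ x y, x ∉ I → y ∉ I → G.Adj x y → H.Adj x y)
    (hexit : ∀ x z, x ∈ I → G.Adj x z → z ∉ I → z ∈ B) (hB : B.Pairwise H.Adj)
    {x y : V} (w : G.Walk x y) (hx : x ∉ I) (hy : y ∉ I) :
    ∃ q : H.Walk x y, ∀ v ∈ q.support, v ∈ w.support ∧ v ∉ I := by
  obtain ⟨c, rfl | ⟨hxI, -⟩, hq⟩ := w.exists_exit_walk_avoiding hGH hexit hB hy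
  · exact hq
  · exact absurd hxI hx

theorem support_subset_of_adj_mem {S : Set V} (hS : ∀ x y, G.Adj x y → y ∈ S) {x y : V}
    (w : G.Walk x y) (hx : x ∈ S) : ∀ v ∈ w.support, v ∈ S := by
  induction w with
  | nil => simpa using hx
  | cons h w ih => simpa [hx] using ih (hS _ _ h)

end SimpleGraph.Walk

section Biconnected

variable {G : SimpleGraph V}

theorem Biconnected.exists_walk_avoiding (hG : Biconnected G) {x y u : V} (hx : x ≠ u)
    (hy : y ≠ u) : ∃ w : G.Walk x y, ∀ v ∈ w.support, v ≠ u := by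
  have hconn : (G.induce {v | v ≠ u}).Connected := not_not.1 fun h => hG.2 u ⟨hG.1, h⟩
  obtain ⟨w⟩ := hconn.preconnected ⟨x, hx⟩ ⟨y, hy⟩
  refine ⟨w.map (Embedding.induce _).toHom, fun v hv => ?_⟩
  obtain ⟨v', -, rfl⟩ := List.mem_map.1 (Walk.support_map _ _ ▸ hv)
  exact v'.2

theorem Biconnected.induce_of_reroute {H : SimpleGraph V} {S : Set V} (hG : Biconnected G)
    (hS : S.Nontrivial)
    (hreroute : ∀ {x y} (w : G.Walk x y), x ∈ S → y ∈ S →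
      ∃ q : H.Walk x y, ∀ v ∈ q.support, v ∈ S ∧ v ∈ w.support) :
    Biconnected (H.induce S) := by
  refine ⟨?_, fun u hu => hu.2 ?_⟩
  · have : Nonempty S := hS.nonempty.to_subtype
    refine (connected_iff _).2 ⟨fun x y => ?_, this⟩
    obtain ⟨q, hq⟩ := hreroute (hG.1.preconnected x y).some x.2 y.2
    exact (q.induce S fun v hv => (hq v hv).1).reachable
  · obtain ⟨a, ha, hau⟩ := hS.exists_ne u.1
    refine (connected_iff _).2 ⟨fun x y => ?_, ⟨⟨⟨a, ha⟩, fun h => hau (congrArg Subtype.val h)⟩⟩⟩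
    obtain ⟨w, hw⟩ := hG.exists_walk_avoiding (fun h => x.2 (Subtype.ext h))
      (fun h => y.2 (Subtype.ext h))
    obtain ⟨q, hq⟩ := hreroute w x.1.2 y.1.2
    let q' := q.induce S fun v hv => (hq v hv).1
    have hq' : ∀ v ∈ q'.support, v ∈ {v | v ≠ u} := by
      intro v hv
      rw [Walk.support_induce, List.mem_attachWith] at hv
      exact fun h => hw v.1 (hq v.1 hv).2 (congrArg Subtype.val h)
    exact (q'.induce _ hq').reachable

end Biconnected

namespace SimpleGraph.Walk

variable {G : SimpleGraph V} {u v : V}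

def internalVertices (p : G.Walk u v) : Set V := {x | x ∈ p.support ∧ x ≠ u ∧ x ≠ v}

def shortcutEdgeSet (p : G.Walk u v) : Set (Sym2 V) :=
  (G.edgeSet \ {e | e ∈ p.edges}) ∪ {s(u, v)}

variable {p : G.Walk u v}

theorem IsPath.mem_edges_of_adj (hp : p.IsPath) (hdeg : ∀ x ∈ p.internalVertices, deg G x = 2)
    {x y : V} (hx : x ∈ p.internalVertices) (hxy : G.Adj x y) : s(x, y) ∈ p.edges := by
  obtain ⟨hxp, hxu, hxv⟩ := hx
  obtain ⟨i, rfl, hi⟩ := mem_support_iff_exists_getVert.1 hxp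
  have hi0 : i ≠ 0 := by rintro rfl; exact hxu p.getVert_zero
  have hil : i < p.length := lt_of_le_of_ne hi fun h => hxv (h ▸ p.getVert_length)
  have hnbr : p.toSubgraph.neighborSet (p.getVert i) = G.neighborSet (p.getVert i) := by
    have h2 := hdeg _ ⟨hxp, hxu, hxv⟩
    refine Set.eq_of_subset_of_ncard_le (fun y hy => p.toSubgraph.adj_sub hy) ?_
      (Set.finite_of_ncard_ne_zero (show deg G _ ≠ 0 by omega))
    rw [hp.ncard_neighborSet_toSubgraph_internal_eq_two hi0 hil]
    exact h2.le
  have : p.toSubgraph.Adj (p.getVert i) y := (Set.ext_iff.1 hnbr y).2 hxy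
  exact p.mem_edges_toSubgraph.1 (Subgraph.mem_edgeSet.2 this)

theorem eq_or_eq_of_notMem_internalVertices {x : V} (hx : x ∈ p.support)
    (hxI : x ∉ p.internalVertices) : x = u ∨ x = v := by
  by_contra h
  exact hxI ⟨hx, fun h' => h (.inl h'), fun h' => h (.inr h')⟩

theorem IsPath.mem_ends_of_adj (hp : p.IsPath) (hdeg : ∀ x ∈ p.internalVertices, deg G x = 2)
    {x z : V} (hx : x ∈ p.internalVertices) (hxz : G.Adj x z) (hz : z ∉ p.internalVertices) :
    z ∈ ({u, v} : Set V) :=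
  eq_or_eq_of_notMem_internalVertices
    (p.snd_mem_support_of_mem_edges (hp.mem_edges_of_adj hdeg hx hxz)) hz

theorem fromEdgeSet_shortcutEdgeSet_adj {x y : V} (hx : x ∉ p.internalVertices)
    (hy : y ∉ p.internalVertices) (hxy : G.Adj x y) :
    (fromEdgeSet p.shortcutEdgeSet).Adj x y := by
  refine (fromEdgeSet_adj _).2 ⟨?_, hxy.ne⟩
  by_cases he : s(x, y) ∈ p.edges
  · -- an edge of `p` with no internal end joins its two ends
    right
    rcases eq_or_eq_of_notMem_internalVertices (p.fst_mem_support_of_mem_edges he) hx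
      with rfl | rfl <;>
    rcases eq_or_eq_of_notMem_internalVertices (p.snd_mem_support_of_mem_edges he) hy
      with rfl | rfl
    all_goals first | exact absurd rfl hxy.ne | simp [Sym2.eq_swap]
  · exact Or.inl ⟨hxy, he⟩

theorem mem_verts_shortcutEdgeSet_left : u ∈ {x | ∃ e ∈ p.shortcutEdgeSet, x ∈ e} :=
  ⟨s(u, v), Or.inr rfl, Sym2.mem_mk_left _ _⟩

theorem mem_verts_shortcutEdgeSet_right : v ∈ {x | ∃ e ∈ p.shortcutEdgeSet, x ∈ e} :=
  ⟨s(u, v), Or.inr rfl, Sym2.mem_mk_right _ _⟩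

theorem IsPath.disjoint_verts_shortcutEdgeSet (hp : p.IsPath)
    (hdeg : ∀ x ∈ p.internalVertices, deg G x = 2) :
    Disjoint {x | ∃ e ∈ p.shortcutEdgeSet, x ∈ e} p.internalVertices := by
  rw [Set.disjoint_left]
  rintro x ⟨e, ⟨he, hep⟩ | he, hxe⟩ hx
  · obtain ⟨y, rfl⟩ := Sym2.mem_iff_exists.1 hxe
    exact hep (hp.mem_edges_of_adj hdeg hx he)
  · rw [Set.mem_singleton_iff] at he
    subst he
    rcases Sym2.mem_iff.1 hxe with rfl | rfl
    exacts [hx.2.1 rfl, hx.2.2 rfl]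

theorem IsPath.biconnected_graphOn_shortcutEdgeSet (hG : Biconnected G) (hp : p.IsPath)
    (hdeg : ∀ x ∈ p.internalVertices, deg G x = 2) (huv : u ≠ v) :
    Biconnected (graphOn p.shortcutEdgeSet) := by
  have hI := hp.disjoint_verts_shortcutEdgeSet hdeg
  refine hG.induce_of_reroute ⟨u, mem_verts_shortcutEdgeSet_left, v,
    mem_verts_shortcutEdgeSet_right, huv⟩ fun w hx hy => ?_
  have huvH : (fromEdgeSet p.shortcutEdgeSet).Adj u v := (fromEdgeSet_adj _).2 ⟨Or.inr rfl, huv⟩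
  obtain ⟨q, hq⟩ := w.exists_walk_avoiding (fun x y => fromEdgeSet_shortcutEdgeSet_adj)
    (fun x z => hp.mem_ends_of_adj hdeg) (Set.pairwise_pair.2 fun _ => ⟨huvH, huvH.symm⟩)
    (hI.notMem_of_mem_left hx) (hI.notMem_of_mem_left hy)
  have hqS := q.support_subset_of_adj_mem (S := {x | ∃ e ∈ p.shortcutEdgeSet, x ∈ e})
    (fun a b hab => ⟨s(a, b), ((fromEdgeSet_adj _).1 hab).1, Sym2.mem_mk_right _ _⟩) hx
  exact ⟨q, fun x hx => ⟨hqS x hx, (hq x hx).1⟩⟩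

theorem IsPath.isMinorOf_graphOn_shortcutEdgeSet (hp : p.IsPath)
    (hdeg : ∀ x ∈ p.internalVertices, deg G x = 2) (huv : u ≠ v) :
    IsMinorOf (graphOn p.shortcutEdgeSet) G := by
  have hnil : ¬p.Nil := not_nil_of_ne huv
  have hv : v ∉ p.dropLast.support := by
    have h := hp
    rw [← concat_dropLast (p.adj_penultimate hnil), concat_isPath_iff] at h
    exact h.2
  refine isMinorOf_of_contract (A := {x | x ∈ p.dropLast.support}) (a := u) _
    p.dropLast.connected_induce_support ?_ ?_
  · refine Set.eq_singleton_iff_unique_mem.2 ⟨⟨p.dropLast.start_mem_support,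
      mem_verts_shortcutEdgeSet_left⟩, fun x ⟨hxA, hxS⟩ => ?_⟩
    have hxp : x ∈ p.support := by
      rw [support_dropLast hnil] at hxA
      exact List.mem_of_mem_dropLast hxA
    refine (eq_or_eq_of_notMem_internalVertices hxp
      ((hp.disjoint_verts_shortcutEdgeSet hdeg).notMem_of_mem_left hxS)).resolve_right ?_
    rintro rfl
    exact hv hxA
  · rintro ⟨x, hx⟩ ⟨y, hy⟩ hadj
    replace hadj : (fromEdgeSet p.shortcutEdgeSet).Adj x y := hadj
    obtain ⟨hxy | hxy, -⟩ := (fromEdgeSet_adj _).1 hadj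
    · exact ⟨x, y, Or.inl rfl, Or.inl rfl, hxy.1⟩
    · rcases Sym2.eq_iff.1 hxy with ⟨rfl, rfl⟩ | ⟨rfl, rfl⟩
      · exact ⟨p.penultimate, _, Or.inr ⟨p.dropLast.end_mem_support, rfl⟩, Or.inl rfl,
          p.adj_penultimate hnil⟩
      · exact ⟨_, p.penultimate, Or.inl rfl, Or.inr ⟨p.dropLast.end_mem_support, rfl⟩,
          (p.adj_penultimate hnil).symm⟩

end SimpleGraph.Walk

theorem chain_replacement_biconnected_outerplanar_general {G : SimpleGraph V}
    (hB : Biconnected G) (hO : Outerplanar G)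
    {v₁ v₂ : V} (p : G.Walk v₁ v₂) (hp : IsGraphChain G p) :
    Biconnected (graphOn ((G.edgeSet \ {e | e ∈ p.edges}) ∪ {s(v₁, v₂)})) ∧
    Outerplanar (graphOn ((G.edgeSet \ {e | e ∈ p.edges}) ∪ {s(v₁, v₂)})) := by
  obtain ⟨hpath, hlen, hdeg, -⟩ := hp
  have hne : v₁ ≠ v₂ := by
    rintro rfl
    have := Walk.length_eq_zero_iff.2 (Walk.isPath_iff_nil.1 hpath)
    omega
  have hdeg' : ∀ x ∈ p.internalVertices, deg G x = 2 := fun x hx => hdeg x hx.1 hx.2.1 hx.2.2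
  exact ⟨hpath.biconnected_graphOn_shortcutEdgeSet hB hdeg' hne,
    hO.of_isMinorOf (hpath.isMinorOf_graphOn_shortcutEdgeSet hdeg' hne)⟩

/-- Replacing a chain of a biconnected outerplanar graph by the edge between
its endpoints yields a biconnected outerplanar graph. -/
theorem chain_replacement_biconnected_outerplanar [Fintype V] {G : SimpleGraph V}
    (hB : Biconnected G) (hO : Outerplanar G) (h3 : 3 ≤ Fintype.card V)
    {v₁ v₂ : V} (p : G.Walk v₁ v₂) (hp : IsGraphChain G p) :
    Biconnected (graphOn ((G.edgeSet \ {e | e ∈ p.edges}) ∪ {s(v₁, v₂)})) ∧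
    Outerplanar (graphOn ((G.edgeSet \ {e | e ∈ p.edges}) ∪ {s(v₁, v₂)})) :=
  chain_replacement_biconnected_outerplanar_general hB hO p hp
end

section
/- If a vertex u of a biconnected graph G is adjacent to three distinct vertices x, y, z each of degree 2 in G, then G contains K_{2,3} as a minor. -/
open SimpleGraph

universe u₁ u₂

variable {V : Type u₁} {W : Type u₂}

/-! Deleting `u` leaves a connected graph in which `x`, `y`, `z` are leaves. A leaf never lies
inside a path, so deleting the three leaves as well leaves a connected set `T`. No two of
`x`, `y`, `z` are adjacent, since an adjacent pair of leaves would be a whole component of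
`G - u`; hence each of them has its second neighbour in `T`, and `{u}`, `T` against `{x}`,
`{y}`, `{z}` are the branch sets of a `K₂,₃` minor. -/

open Function

namespace SimpleGraph

variable {G : SimpleGraph V} {S A : Set V}

theorem Preconnected.subset_of_neighborSet_inter_subset (hS : (G.induce S).Preconnected)
    {T : Set V} (hTS : T ⊆ S) (hT : T.Nonempty) (hclosed : ∀ v ∈ T, G.neighborSet v ∩ S ⊆ T) :
    S ⊆ T := by
  obtain ⟨t, ht⟩ := hT
  intro s hs
  by_contra hsT
  obtain ⟨p⟩ := hS ⟨t, hTS ht⟩ ⟨s, hs⟩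
  obtain ⟨d, -, hd₁, hd₂⟩ := p.exists_boundary_dart {v | v.1 ∈ T} ht hsT
  exact hd₂ (hclosed _ hd₁ ⟨d.adj, d.snd.2⟩)

theorem Preconnected.subset_pair_of_adj (hS : (G.induce S).Preconnected) {a b : V}
    (hab : G.Adj a b) (haS : a ∈ S) (hbS : b ∈ S) (ha : (G.neighborSet a ∩ S).Subsingleton)
    (hb : (G.neighborSet b ∩ S).Subsingleton) : S ⊆ {a, b} := by
  refine hS.subset_of_neighborSet_inter_subset (Set.pair_subset haS hbS) ⟨a, .inl rfl⟩ ?_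
  rintro v (rfl | rfl) w hw
  · exact .inr (ha hw ⟨hab, hbS⟩)
  · exact .inl (hb hw ⟨hab.symm, haS⟩)

theorem Preconnected.induce_diff_of_subsingleton (hS : (G.induce S).Preconnected)
    (hA : ∀ a ∈ A, (G.neighborSet a ∩ S).Subsingleton) : (G.induce (S \ A)).Preconnected := by
  have hleaf : ∀ v ∉ {v : S | v.1 ∉ A}, ((G.induce S).neighborSet v).Subsingleton :=
    fun v hv w hw w' hw' => Subtype.ext (hA v (not_not.mp hv) ⟨hw, w.2⟩ ⟨hw', w'.2⟩)
  let f : (G.induce S).induce {v : S | v.1 ∉ A} →g G.induce (S \ A) :=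
    ⟨fun v => ⟨v.1.1, v.1.2, v.2⟩, id⟩
  exact (hS.induce_of_degree_eq_one hleaf).map f fun v => ⟨⟨⟨v.1, v.2.1⟩, v.2.2⟩, rfl⟩

theorem Preconnected.notMem_of_adj_of_two_lt_ncard (hS : (G.induce S).Preconnected)
    (hAS : A ⊆ S) (hA : ∀ a ∈ A, (G.neighborSet a ∩ S).Subsingleton) (hA3 : 2 < A.ncard)
    {a b : V} (ha : a ∈ A) (hab : G.Adj a b) (hbS : b ∈ S) : b ∉ A := by
  intro hb
  have hApair : A ⊆ {a, b} :=
    hAS.trans <| hS.subset_pair_of_adj hab (hAS ha) hbS (hA a ha) (hA b hb)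
  have hcard := (Set.ncard_le_ncard hApair).trans (Set.ncard_insert_le a {b})
  rw [Set.ncard_singleton] at hcard
  omega

theorem exists_neighborSet_diff_eq_singleton {u v : V} (hv : deg G v = 2) (huv : G.Adj u v) :
    ∃ w, G.neighborSet v \ {u} = {w} := by
  have hu : u ∈ G.neighborSet v := huv.symm
  rw [← Set.ncard_eq_one, Set.ncard_sdiff_singleton_of_mem hu, ← deg, hv]

end SimpleGraph

open Classical in
theorem isMinorOf_of_branchSets {H : SimpleGraph W} {G : SimpleGraph V} (B : W → Set V)
    (hdisj : Pairwise (Disjoint on B)) (hconn : ∀ w, (G.induce (B w)).Connected)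
    (hadj : ∀ w₁ w₂, H.Adj w₁ w₂ → ∃ v₁ ∈ B w₁, ∃ v₂ ∈ B w₂, G.Adj v₁ v₂) :
    IsMinorOf H G := by
  let f : V → Option W := fun v => if h : ∃ w, v ∈ B w then some h.choose else none
  have hf : ∀ v w, f v = some w ↔ v ∈ B w := by
    intro v w
    by_cases h : ∃ w, v ∈ B w
    · simp only [f, dif_pos h, Option.some.injEq]
      exact ⟨fun hw => hw ▸ h.choose_spec, fun hv =>
        hdisj.eq (Set.not_disjoint_iff.mpr ⟨v, h.choose_spec, hv⟩)⟩
    · simp only [f, dif_neg h, reduceCtorEq, false_iff]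
      exact fun hv => h ⟨w, hv⟩
  refine ⟨f, fun w => ?_, fun w₁ w₂ h => ?_⟩
  · rw [show {v | f v = some w} = B w from Set.ext fun v => hf v w]
    exact hconn w
  · obtain ⟨v₁, h₁, v₂, h₂, hv⟩ := hadj w₁ w₂ h
    exact ⟨v₁, v₂, (hf _ _).mpr h₁, (hf _ _).mpr h₂, hv⟩

theorem isMinorOf_completeBipartiteGraph_fin_two {β : Type*} {G : SimpleGraph V} {u : V}
    {T : Set V} (b : β → V) (hb : Injective b) (hT : (G.induce T).Connected) (huT : u ∉ T)
    (hbT : ∀ j, b j ∉ T) (hub : ∀ j, G.Adj u (b j)) (hTb : ∀ j, ∃ t ∈ T, G.Adj t (b j)) :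
    IsMinorOf (completeBipartiteGraph (Fin 2) β) G := by
  have hsingle : ∀ v : V, (G.induce {v}).Connected := fun v => by simp
  refine isMinorOf_of_branchSets (Sum.elim ![{u}, T] fun j => {b j}) ?_ ?_ ?_
  · rintro (i | j) (i' | j') hne
    · fin_cases i <;> fin_cases i' <;> simp_all [onFun]
    · fin_cases i <;> simp_all [onFun, (hub j').ne]
    · fin_cases i' <;> simp_all [onFun, (hub j).ne']
    · simp_all [onFun, hb.ne_iff]
  · rintro (i | j)
    · fin_cases i
      exacts [hsingle u, hT]
    · exact hsingle (b j)
  · rintro (i | j) (i' | j') h <;> simp at h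
    · fin_cases i
      · exact ⟨u, rfl, b j', rfl, hub j'⟩
      · obtain ⟨t, ht, htb⟩ := hTb j'
        exact ⟨t, ht, b j', rfl, htb⟩
    · fin_cases i'
      · exact ⟨b j, rfl, u, rfl, (hub j).symm⟩
      · obtain ⟨t, ht, htb⟩ := hTb j
        exact ⟨b j, rfl, t, ht, htb.symm⟩

theorem K23_minor_of_three_degree_two_neighbors_general {G : SimpleGraph V}
    (hB : Biconnected G) {u x y z : V}
    (hxy : x ≠ y) (hxz : x ≠ z) (hyz : y ≠ z)
    (hux : G.Adj u x) (huy : G.Adj u y) (huz : G.Adj u z)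
    (hdx : deg G x = 2) (hdy : deg G y = 2) (hdz : deg G z = 2) :
    IsMinorOf (completeBipartiteGraph (Fin 2) (Fin 3)) G := by
  set S : Set V := {u}ᶜ
  set A : Set V := {x, y, z}
  have hS : (G.induce S).Preconnected := (not_not.mp fun h => hB.2 u ⟨hB.1, h⟩).preconnected
  have hAS : A ⊆ S := by
    rintro a (rfl | rfl | rfl)
    exacts [hux.ne', huy.ne', huz.ne']
  have hpendant : ∀ a ∈ A, ∃ a', G.neighborSet a ∩ S = {a'} := by
    rintro a (rfl | rfl | rfl)
    exacts [exists_neighborSet_diff_eq_singleton hdx hux,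
      exists_neighborSet_diff_eq_singleton hdy huy, exists_neighborSet_diff_eq_singleton hdz huz]
  have hsub : ∀ a ∈ A, (G.neighborSet a ∩ S).Subsingleton := fun a ha => by
    obtain ⟨a', ha'⟩ := hpendant a ha
    exact ha' ▸ Set.subsingleton_singleton
  have hA3 : 2 < A.ncard := by rw [Set.ncard_eq_three.mpr ⟨x, y, z, hxy, hxz, hyz, rfl⟩]; omega
  have hlink : ∀ a ∈ A, ∃ t ∈ S \ A, G.Adj t a := fun a ha => by
    obtain ⟨a', ha'⟩ := hpendant a ha
    obtain ⟨haa', ha'S⟩ : a' ∈ G.neighborSet a ∩ S := ha' ▸ rfl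
    exact ⟨a', ⟨ha'S, hS.notMem_of_adj_of_two_lt_ncard hAS hsub hA3 ha haa' ha'S⟩, haa'.symm⟩
  obtain ⟨t, ht, -⟩ := hlink x (.inl rfl)
  have hT : (G.induce (S \ A)).Connected :=
    (connected_iff _).mpr ⟨hS.induce_diff_of_subsingleton hsub, ⟨t, ht⟩⟩
  have hmemA : ∀ j, ![x, y, z] j ∈ A := fun j => by fin_cases j <;> simp [A]
  refine isMinorOf_completeBipartiteGraph_fin_two ![x, y, z] ?_ hT (fun h => h.1 rfl)
    (fun j h => h.2 (hmemA j)) (fun j => ?_) (fun j => hlink _ (hmemA j))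
  · intro i j h
    fin_cases i <;> fin_cases j <;> simp_all [eq_comm]
  · fin_cases j <;> assumption

/-- If a vertex of a biconnected graph is adjacent to three distinct vertices
of degree two, then the graph has a `K₂,₃` minor. -/
theorem K23_minor_of_three_degree_two_neighbors [Fintype V] {G : SimpleGraph V}
    (hB : Biconnected G) {u x y z : V}
    (hxy : x ≠ y) (hxz : x ≠ z) (hyz : y ≠ z)
    (hux : G.Adj u x) (huy : G.Adj u y) (huz : G.Adj u z)
    (hdx : deg G x = 2) (hdy : deg G y = 2) (hdz : deg G z = 2) :
    IsMinorOf (completeBipartiteGraph (Fin 2) (Fin 3)) G :=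
  K23_minor_of_three_degree_two_neighbors_general hB hxy hxz hyz hux huy huz hdx hdy hdz
end
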